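/- For every integer q ≥ 5 and every real t with 0 ≤ t < 1, 1/2 − β^{q−2}(t) ≤ √((q−2)/(q−4)) · (Φ(t·√(q−4)) − 1/2). -/

import Mathlib

open MeasureTheory Filter

/-- The standard normal cumulative distribution function. -/
noncomputable def Phi (x : ℝ) : ℝ :=
  ∫ t in Set.Iic x, Real.exp (-t ^ 2 / 2) / Real.sqrt (2 * Real.pi)

/-- `betaCap q t` is the normalized surface area `β^{q-2}(t)` of a spherical cap of angular
half-width `arccos t` on a `(q-2)`-dimensional sphere. -/
noncomputable def betaCap (q : ℕ) (t : ℝ) : ℝ :=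
  (Real.Gamma (((q : ℝ) - 1) / 2) / (Real.Gamma (1 / 2) * Real.Gamma (((q : ℝ) - 2) / 2))) *
    ∫ v in t..1, (1 - v ^ 2) ^ ((q : ℝ) / 2 - 2)

lemma sq_image_Ioc01 : (fun v : ℝ => v ^ 2) '' Set.Ioc 0 1 = Set.Ioc 0 1 := by
  ext y
  constructor
  · rintro ⟨v, ⟨hv0, hv1⟩, rfl⟩
    simp only [Set.mem_Ioc]
    exact ⟨by positivity, by nlinarith⟩
  · rintro ⟨hy0, hy1⟩
    refine ⟨Real.sqrt y, ⟨Real.sqrt_pos.2 hy0, ?_⟩, Real.sq_sqrt hy0.le⟩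
    rw [show (1:ℝ) = Real.sqrt 1 by simp]
    exact Real.sqrt_le_sqrt hy1

lemma beta_complex_transfer (p : ℝ) (hp : 0 < p) :
    Real.Gamma (1/2) * Real.Gamma (p+1)
      = Real.Gamma (p + 3/2) * ∫ u in (0:ℝ)..1, u ^ (-(1/2) : ℝ) * (1-u) ^ p := by
  have hu : 0 < Complex.re (1/2 : ℂ) := by norm_num
  have hv : 0 < Complex.re ((p+1 : ℝ) : ℂ) := by simp; linarith
  have h := Complex.Gamma_mul_Gamma_eq_betaIntegral hu hv
  have hB : Complex.betaIntegral (1/2) ((p+1:ℝ):ℂ)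
      = ((∫ u in (0:ℝ)..1, u ^ (-(1/2) : ℝ) * (1-u) ^ p : ℝ) : ℂ) := by
    rw [Complex.betaIntegral, ← intervalIntegral.integral_ofReal]
    apply intervalIntegral.integral_congr
    intro x hx
    rw [Set.uIcc_of_le zero_le_one] at hx
    have h1 : ((1/2 : ℂ) - 1) = ((-(1/2):ℝ):ℂ) := by norm_num
    have h2 : (((p+1:ℝ):ℂ) - 1) = ((p:ℝ):ℂ) := by push_cast; ring
    have h3 : (1 - (x:ℂ)) = ((1-x : ℝ):ℂ) := by push_cast; ring
    show (x:ℂ) ^ ((1/2:ℂ)-1) * (1 - (x:ℂ)) ^ (((p+1:ℝ):ℂ)-1)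
      = ((x ^ (-(1/2):ℝ) * (1-x) ^ p : ℝ) : ℂ)
    rw [h1, h2, h3, ← Complex.ofReal_cpow hx.1, ← Complex.ofReal_cpow (by linarith [hx.2]),
      ← Complex.ofReal_mul]
  rw [hB] at h
  have hg1 : Complex.Gamma (1/2 : ℂ) = ((Real.Gamma (1/2) : ℝ) : ℂ) := by
    rw [show (1/2 : ℂ) = ((1/2 : ℝ) : ℂ) by norm_num, Complex.Gamma_ofReal]
  have hg2 : Complex.Gamma (((p+1:ℝ)) : ℂ) = ((Real.Gamma (p+1) : ℝ) : ℂ) :=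
    Complex.Gamma_ofReal _
  have hg3 : Complex.Gamma ((1/2 : ℂ) + ((p+1:ℝ):ℂ)) = ((Real.Gamma (p + 3/2) : ℝ) : ℂ) := by
    rw [show (1/2 : ℂ) + ((p+1:ℝ):ℂ) = ((p + 3/2 : ℝ) : ℂ) by push_cast; ring,
      Complex.Gamma_ofReal]
  rw [hg1, hg2, hg3, ← Complex.ofReal_mul, ← Complex.ofReal_mul] at h
  exact_mod_cast h

lemma beta_subst (p : ℝ) (hp : 0 < p) :
    ∫ u in (0:ℝ)..1, u ^ (-(1/2):ℝ) * (1-u) ^ p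
      = 2 * ∫ v in (0:ℝ)..1, (1 - v^2) ^ p := by
  rw [intervalIntegral.integral_of_le zero_le_one, intervalIntegral.integral_of_le zero_le_one]
  have hderiv : ∀ x ∈ Set.Ioc (0:ℝ) 1,
      HasDerivWithinAt (fun v : ℝ => v^2) (2*x) (Set.Ioc 0 1) x := by
    intro x hx
    simpa using (hasDerivAt_pow 2 x).hasDerivWithinAt (s := Set.Ioc 0 1)
  have hinj : Set.InjOn (fun v:ℝ => v^2) (Set.Ioc 0 1) := by
    intro a ha b hb hab
    simp only at hab
    have : |a| = |b| := by rw [← Real.sqrt_sq_eq_abs, ← Real.sqrt_sq_eq_abs, hab]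
    rwa [abs_of_pos ha.1, abs_of_pos hb.1] at this
  have himg := sq_image_Ioc01
  calc ∫ u in Set.Ioc (0:ℝ) 1, u ^ (-(1/2):ℝ) * (1-u) ^ p
      = ∫ x in Set.Ioc (0:ℝ) 1, |2*x| • ((x^2) ^ (-(1/2):ℝ) * (1-x^2) ^ p) := by
        conv_lhs => rw [← himg]
        rw [MeasureTheory.integral_image_eq_integral_abs_deriv_smul measurableSet_Ioc hderiv hinj]
    _ = ∫ x in Set.Ioc (0:ℝ) 1, 2 * (1-x^2) ^ p := by
        apply setIntegral_congr_fun measurableSet_Ioc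
        intro x hx
        have hx0 : 0 < x := hx.1
        have hx2 : ((x^2 : ℝ)) ^ (-(1/2) : ℝ) = x⁻¹ := by
          rw [← Real.rpow_natCast x 2, ← Real.rpow_mul hx0.le,
            show ((2:ℕ):ℝ) * (-(1/2):ℝ) = -1 by norm_num, Real.rpow_neg_one]
        simp only [smul_eq_mul]
        rw [hx2, abs_of_pos (by linarith : (0:ℝ) < 2*x)]
        field_simp
    _ = 2 * ∫ x in Set.Ioc (0:ℝ) 1, (1-x^2) ^ p := by
        rw [MeasureTheory.integral_const_mul]

lemma beta_value (p : ℝ) (hp : 0 < p) :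
    ∫ v in (0:ℝ)..1, (1 - v^2) ^ p
      = Real.Gamma (1/2) * Real.Gamma (p+1) / (2 * Real.Gamma (p + 3/2)) := by
  have h := beta_complex_transfer p hp
  rw [beta_subst p hp] at h
  have hΓ : 0 < Real.Gamma (p + 3/2) := Real.Gamma_pos_of_pos (by linarith)
  rw [eq_div_iff (by positivity)]
  linarith [h]

lemma gamma_add_half_le (x : ℝ) (hx : 0 < x) :
    Real.Gamma (x + 1/2) ≤ Real.sqrt x * Real.Gamma x := by
  have hconv := Real.convexOn_log_Gamma
  have h := hconv.2 (Set.mem_Ioi.2 hx) (Set.mem_Ioi.2 (by linarith : (0:ℝ) < x+1))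
    (by norm_num : (0:ℝ) ≤ 1/2) (by norm_num : (0:ℝ) ≤ 1/2) (by norm_num)
  simp only [smul_eq_mul, Function.comp_apply] at h
  have hmid : (1/2 : ℝ) * x + (1/2 : ℝ) * (x+1) = x + 1/2 := by ring
  rw [hmid] at h
  have hΓx : 0 < Real.Gamma x := Real.Gamma_pos_of_pos hx
  have hΓh : 0 < Real.Gamma (x + 1/2) := Real.Gamma_pos_of_pos (by linarith)
  rw [Real.Gamma_add_one hx.ne', Real.log_mul hx.ne' hΓx.ne'] at h
  -- h : log Γ(x+1/2) ≤ 1/2 * log Γ x + 1/2 * (log x + log Γ x)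
  have key : Real.log (Real.Gamma (x + 1/2)) ≤ Real.log (Real.sqrt x * Real.Gamma x) := by
    rw [Real.log_mul (Real.sqrt_ne_zero'.2 hx) hΓx.ne', Real.log_sqrt hx.le]
    linarith
  calc Real.Gamma (x + 1/2) = Real.exp (Real.log (Real.Gamma (x + 1/2))) :=
        (Real.exp_log hΓh).symm
    _ ≤ Real.exp (Real.log (Real.sqrt x * Real.Gamma x)) := Real.exp_le_exp.2 key
    _ = Real.sqrt x * Real.Gamma x := Real.exp_log (by positivity)


lemma gauss_eq : (fun x : ℝ => Real.exp (-x ^ 2 / 2) / Real.sqrt (2 * Real.pi))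
    = fun x => Real.exp (-(1/2) * x ^ 2) * (Real.sqrt (2 * Real.pi))⁻¹ := by
  funext x
  rw [div_eq_mul_inv]
  ring_nf

lemma gauss_integrable :
    Integrable (fun x : ℝ => Real.exp (-x ^ 2 / 2) / Real.sqrt (2 * Real.pi)) := by
  rw [gauss_eq]
  exact (integrable_exp_neg_mul_sq (by norm_num)).mul_const _

lemma gauss_total :
    ∫ x : ℝ, Real.exp (-x ^ 2 / 2) / Real.sqrt (2 * Real.pi) = 1 := by
  rw [gauss_eq, MeasureTheory.integral_mul_const, integral_gaussian,
    show Real.pi / (1/2) = 2 * Real.pi by ring]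
  exact mul_inv_cancel₀ (Real.sqrt_ne_zero'.2 (by positivity))

lemma Phi_zero : Phi 0 = 1/2 := by
  set φ : ℝ → ℝ := fun x => Real.exp (-x ^ 2 / 2) / Real.sqrt (2 * Real.pi) with hφdef
  have hsymm : ∫ x in Set.Iic (0:ℝ), φ x = ∫ x in Set.Ioi (0:ℝ), φ x := by
    have h := integral_comp_neg_Iic (0:ℝ) φ
    simp only [neg_zero] at h
    rw [← h]
    apply setIntegral_congr_fun measurableSet_Iic
    intro x _
    simp [hφdef, neg_sq]
  have hsum : (∫ x in Set.Iic (0:ℝ), φ x) + ∫ x in Set.Ioi (0:ℝ), φ x = 1 := by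
    have h := MeasureTheory.integral_add_compl (measurableSet_Iic (a := (0:ℝ)))
      gauss_integrable
    rw [Set.compl_Iic] at h
    rw [h]
    exact gauss_total
  have : Phi 0 = ∫ x in Set.Iic (0:ℝ), φ x := rfl
  rw [this]
  linarith [hsymm, hsum]

lemma Phi_sub (x : ℝ) :
    Phi x - 1/2 = ∫ s in (0:ℝ)..x, Real.exp (-s ^ 2 / 2) / Real.sqrt (2 * Real.pi) := by
  rw [← Phi_zero, Phi, Phi]
  exact intervalIntegral.integral_Iic_sub_Iic gauss_integrable.integrableOn
    gauss_integrable.integrableOn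

set_option maxHeartbeats 1000000 in
/-- The bound (21): for `q ≥ 5` and `0 ≤ t < 1`,
`1/2 - β^{q-2}(t) ≤ √((q-2)/(q-4)) (Φ(t√(q-4)) - 1/2)`. -/
theorem stmt2 (q : ℕ) (hq : 5 ≤ q) (t : ℝ) (ht0 : 0 ≤ t) (ht1 : t < 1) :
    1 / 2 - betaCap q t ≤
      Real.sqrt (((q : ℝ) - 2) / ((q : ℝ) - 4)) * (Phi (t * Real.sqrt ((q : ℝ) - 4)) - 1 / 2) := by
  have hq5 : (5:ℝ) ≤ (q:ℝ) := by exact_mod_cast hq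
  set p : ℝ := (q:ℝ)/2 - 2 with hpdef
  have hp : 0 < p := by rw [hpdef]; linarith
  -- continuity of the cap integrand
  have hgc : Continuous fun v : ℝ => (1 - v^2) ^ p := by
    have h1 : Continuous fun y : ℝ => y ^ p := by
      rw [continuous_iff_continuousAt]
      intro y
      exact Real.continuousAt_rpow_const y p (Or.inr hp.le)
    exact h1.comp (by continuity)
  have hsplit : (∫ v in (0:ℝ)..t, (1 - v^2) ^ p) + (∫ v in t..1, (1 - v^2) ^ p)
      = ∫ v in (0:ℝ)..1, (1 - v^2) ^ p :=
    intervalIntegral.integral_add_adjacent_intervals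
      (hgc.intervalIntegrable 0 t) (hgc.intervalIntegrable t 1)
  set c : ℝ := Real.Gamma (((q : ℝ) - 1) / 2) /
      (Real.Gamma (1 / 2) * Real.Gamma (((q : ℝ) - 2) / 2)) with hcdef
  have e1 : ((q:ℝ)-1)/2 = p + 3/2 := by rw [hpdef]; ring
  have e2 : ((q:ℝ)-2)/2 = p + 1 := by rw [hpdef]; ring
  have hΓ1 : 0 < Real.Gamma (p + 3/2) := Real.Gamma_pos_of_pos (by linarith)
  have hΓ2 : 0 < Real.Gamma (p + 1) := Real.Gamma_pos_of_pos (by linarith)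
  have hΓh : 0 < Real.Gamma (1/2 : ℝ) := Real.Gamma_pos_of_pos (by norm_num)
  have hc : c = Real.Gamma (p + 3/2) / (Real.Gamma (1/2) * Real.Gamma (p+1)) := by
    rw [hcdef, e1, e2]
  have hcpos : 0 < c := by rw [hc]; positivity
  have hJ : c * ∫ v in (0:ℝ)..1, (1 - v^2) ^ p = 1/2 := by
    rw [beta_value p hp, hc]
    field_simp
  have hLHS : 1/2 - betaCap q t = c * ∫ v in (0:ℝ)..t, (1 - v^2) ^ p := by
    have hb : betaCap q t = c * ∫ v in t..1, (1 - v^2) ^ p := by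
      rw [betaCap, hcdef, hpdef]
    rw [← hsplit, mul_add] at hJ
    rw [hb]
    linarith [hJ]
  -- Gaussian side
  set σ : ℝ := Real.sqrt ((q:ℝ) - 4) with hσdef
  have hσpos : 0 < σ := Real.sqrt_pos.2 (by linarith)
  have hσsq : σ^2 = (q:ℝ) - 4 := Real.sq_sqrt (by linarith)
  have hsub : Phi (t*σ) - 1/2
      = σ * ∫ v in (0:ℝ)..t, Real.exp (-(σ*v) ^ 2 / 2) / Real.sqrt (2*Real.pi) := by
    rw [Phi_sub]
    have h := intervalIntegral.smul_integral_comp_mul_left (a := (0:ℝ)) (b := t)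
      (fun s => Real.exp (-s ^ 2 / 2) / Real.sqrt (2*Real.pi)) σ
    rw [mul_zero, smul_eq_mul] at h
    rw [show t*σ = σ*t from mul_comm t σ]
    exact h.symm
  have hint_eq : (∫ v in (0:ℝ)..t, Real.exp (-(σ*v) ^ 2 / 2) / Real.sqrt (2*Real.pi))
      = (∫ v in (0:ℝ)..t, Real.exp (-(((q:ℝ)-4)*v^2) / 2)) / Real.sqrt (2*Real.pi) := by
    rw [← intervalIntegral.integral_div]
    apply intervalIntegral.integral_congr
    intro v _
    show Real.exp (-(σ*v) ^ 2 / 2) / Real.sqrt (2*Real.pi)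
      = Real.exp (-(((q:ℝ)-4)*v^2) / 2) / Real.sqrt (2*Real.pi)
    rw [mul_pow, hσsq]
  -- constant comparison
  have hq2 : ((q:ℝ)-2) = 2*(p+1) := by rw [hpdef]; ring
  have hsqrt_eq : Real.sqrt ((q:ℝ)-2) / Real.sqrt (2*Real.pi)
      = Real.sqrt (p+1) / Real.sqrt Real.pi := by
    rw [hq2, Real.sqrt_mul (by norm_num : (0:ℝ) ≤ 2), Real.sqrt_mul (by norm_num : (0:ℝ) ≤ 2),
      mul_div_mul_left _ _ (Real.sqrt_ne_zero'.2 (by norm_num : (0:ℝ) < 2))]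
  have hcle : c ≤ Real.sqrt ((q:ℝ)-2) / Real.sqrt (2*Real.pi) := by
    rw [hsqrt_eq, hc, Real.Gamma_one_half_eq]
    have h := gamma_add_half_le (p+1) (by linarith)
    rw [show p + 1 + 1/2 = p + 3/2 by ring] at h
    have hπ : 0 < Real.sqrt Real.pi := Real.sqrt_pos.2 Real.pi_pos
    rw [div_le_div_iff₀ (by positivity) hπ]
    nlinarith [Real.sqrt_nonneg (p+1)]
  have hAσ : Real.sqrt (((q:ℝ)-2)/((q:ℝ)-4)) * σ = Real.sqrt ((q:ℝ)-2) := by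
    rw [hσdef, ← Real.sqrt_mul
      (div_nonneg (by linarith) (by linarith) : (0:ℝ) ≤ ((q:ℝ)-2)/((q:ℝ)-4))]
    congr 1
    rw [div_mul_eq_mul_div, mul_div_assoc, div_self (show ((q:ℝ)-4) ≠ 0 by linarith), mul_one]
  -- pointwise comparison of integrands
  have hmono : (∫ v in (0:ℝ)..t, (1-v^2)^p)
      ≤ ∫ v in (0:ℝ)..t, Real.exp (-(((q:ℝ)-4)*v^2) / 2) := by
    apply intervalIntegral.integral_mono_on ht0 (hgc.intervalIntegrable 0 t)
      (((((continuous_const.mul (continuous_pow 2)).neg).div_const 2).rexp :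
        Continuous fun v:ℝ => Real.exp (-(((q:ℝ)-4)*v^2) / 2)).intervalIntegrable 0 t)
    intro v hv
    have hv1 : v ≤ 1 := hv.2.trans ht1.le
    have h1 : (0:ℝ) ≤ 1 - v^2 := sub_nonneg.2 (pow_le_one₀ hv.1 hv1)
    have h2 : 1 - v^2 ≤ Real.exp (-v^2) := by linarith [Real.add_one_le_exp (-v^2)]
    calc (1-v^2)^p ≤ (Real.exp (-v^2))^p := Real.rpow_le_rpow h1 h2 hp.le
      _ = Real.exp (-(((q:ℝ)-4)*v^2) / 2) := by
          rw [← Real.exp_mul]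
          congr 1
          rw [hpdef]
          ring
  have hI0 : 0 ≤ ∫ v in (0:ℝ)..t, (1-v^2)^p :=
    intervalIntegral.integral_nonneg ht0
      (fun v hv => Real.rpow_nonneg
        (sub_nonneg.2 (pow_le_one₀ hv.1 (hv.2.trans ht1.le))) p)
  -- assemble
  rw [hLHS, hsub, hint_eq, ← mul_assoc, hAσ]
  calc c * ∫ v in (0:ℝ)..t, (1-v^2)^p
      ≤ (Real.sqrt ((q:ℝ)-2) / Real.sqrt (2*Real.pi))
        * ∫ v in (0:ℝ)..t, Real.exp (-(((q:ℝ)-4)*v^2) / 2) :=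
        mul_le_mul hcle hmono hI0 (by positivity)
    _ = Real.sqrt ((q:ℝ)-2)
        * ((∫ v in (0:ℝ)..t, Real.exp (-(((q:ℝ)-4)*v^2) / 2)) / Real.sqrt (2*Real.pi)) := by
        ring
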